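/- arXiv:1705.07176 — 6 statements merged into one kernel-verified Lean document; each statement's English description precedes it below -/
import Mathlib

section
/- Let f_1,…,f_n : ℝ^N → ℝ each be μ-strongly convex and L-smooth, and let f = (1/n)Σ_{i=1}^n f_i. For any points y_1,…,y_n ∈ ℝ^N, set ȳ = (1/n)Σ_i y_i, g = (1/n)Σ_i ∇f_i(y_i), and f̂ = (1/n)Σ_i [ f_i(y_i) + ⟨∇f_i(y_i), ȳ − y_i⟩ ]. Then for every ω ∈ ℝ^N: (1) f(ω) ≥ f̂ + ⟨g, ω − ȳ⟩ + (μ/2)‖ω − ȳ‖², and (2) f(ω) ≤ f̂ + ⟨g, ω − ȳ⟩ + L‖ω − ȳ‖² + (L/n)Σ_{i=1}^n ‖y_i − ȳ‖². -/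
/-!
Each `f i` is squeezed between its linearization at `y i` plus `μ / 2 * ‖ω - y i‖ ^ 2` (strong
convexity) and plus `L * ‖ω - y i‖ ^ 2` (mean value inequality for the `L`-Lipschitz gradient).
Averaging over `i`, the linear parts recentre at `ybar` into `fhat + ⟪g, ω - ybar⟫`, and the
parallel axis identity `∑ ‖ω - y i‖² = n ‖ω - ybar‖² + ∑ ‖y i - ybar‖²` splits the quadratic parts;
in the lower bound the nonnegative spread term is dropped.
-/

open scoped RealInnerProductSpace

section

variable {E : Type*} [NormedAddCommGroup E] [InnerProductSpace ℝ E]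

theorem sum_norm_sub_sq_eq_card_mul_add {ι : Type*} [Fintype ι] (y : ι → E) (ω : E) {ybar : E}
    (hybar : (Fintype.card ι : ℝ) • ybar = ∑ i, y i) :
    ∑ i, ‖ω - y i‖ ^ 2 = Fintype.card ι * ‖ω - ybar‖ ^ 2 + ∑ i, ‖y i - ybar‖ ^ 2 := by
  have hcentered : ∑ i, (ybar - y i) = 0 := by
    rw [Finset.sum_sub_distrib, ← hybar, Finset.sum_const, Finset.card_univ, Nat.cast_smul_eq_nsmul,
      sub_self]
  have hexpand : ∀ i, ‖ω - y i‖ ^ 2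
      = ‖ω - ybar‖ ^ 2 + 2 * ⟪ω - ybar, ybar - y i⟫ + ‖y i - ybar‖ ^ 2 := fun i => by
    rw [← sub_add_sub_cancel ω ybar (y i), norm_add_sq_real, norm_sub_rev ybar]
  simp only [hexpand, Finset.sum_add_distrib, ← Finset.mul_sum, ← inner_sum, hcentered,
    inner_zero_right, Finset.sum_const, Finset.card_univ, nsmul_eq_mul]
  ring

theorem le_add_inner_gradient_add_mul_norm_sq [CompleteSpace E] {f : E → ℝ} {L : ℝ}
    (hf : Differentiable ℝ f) (hlip : ∀ u w, ‖gradient f u - gradient f w‖ ≤ L * ‖u - w‖)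
    (u w : E) : f w ≤ f u + ⟪gradient f u, w - u⟫ + L * ‖w - u‖ ^ 2 := by
  rcases eq_or_ne w u with rfl | hwu
  · simp
  have hL : 0 ≤ L := nonneg_of_mul_nonneg_left ((norm_nonneg _).trans (hlip w u))
    (norm_pos_iff.2 (sub_ne_zero.2 hwu))
  have hmvt : ‖f w - f u - fderiv ℝ f u (w - u)‖ ≤ L * ‖w - u‖ * ‖w - u‖ := by
    refine (convex_segment u w).norm_image_sub_le_of_norm_fderiv_le' (fun x _ => hf x) ?_
      (left_mem_segment ℝ u w) (right_mem_segment ℝ u w)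
    intro x hx
    have hxu : ‖x - u‖ ≤ ‖w - u‖ := by
      simpa only [dist_eq_norm, norm_sub_rev u] using
        (le_add_of_nonneg_right dist_nonneg).trans_eq (dist_add_dist_of_mem_segment hx)
    calc ‖fderiv ℝ f x - fderiv ℝ f u‖ = ‖gradient f x - gradient f u‖ := by
          rw [← toDual_gradient, ← toDual_gradient, ← map_sub, LinearIsometryEquiv.norm_map]
      _ ≤ L * ‖x - u‖ := hlip x u
      _ ≤ L * ‖w - u‖ := by gcongr
  rw [← inner_gradient_left] at hmvt
  have := (abs_le.mp (Real.norm_eq_abs _ ▸ hmvt)).2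
  linarith

theorem inv_card_mul_sum_add_inner_add_mul_norm_sq_eq {ι : Type*} [Fintype ι] [Nonempty ι]
    (a : ι → ℝ) (v y : ι → E) (ω : E) (c : ℝ) {ybar : E}
    (hybar : ybar = (Fintype.card ι : ℝ)⁻¹ • ∑ i, y i) :
    (Fintype.card ι : ℝ)⁻¹ * ∑ i, (a i + ⟪v i, ω - y i⟫ + c * ‖ω - y i‖ ^ 2)
      = (Fintype.card ι : ℝ)⁻¹ * ∑ i, (a i + ⟪v i, ybar - y i⟫)
        + ⟪(Fintype.card ι : ℝ)⁻¹ • ∑ i, v i, ω - ybar⟫ + c * ‖ω - ybar‖ ^ 2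
        + c / Fintype.card ι * ∑ i, ‖y i - ybar‖ ^ 2 := by
  have hcard : (Fintype.card ι : ℝ) ≠ 0 := Nat.cast_ne_zero.2 Fintype.card_ne_zero
  have hinner : ∀ i, ⟪v i, ω - y i⟫ = ⟪v i, ybar - y i⟫ + ⟪v i, ω - ybar⟫ := fun i => by
    rw [← inner_add_right, sub_add_sub_cancel']
  have hvar := sum_norm_sub_sq_eq_card_mul_add y ω
    (by rw [hybar, smul_inv_smul₀ hcard] : (Fintype.card ι : ℝ) • ybar = ∑ i, y i)
  simp only [hinner, Finset.sum_add_distrib, ← Finset.mul_sum, hvar, real_inner_smul_left,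
    ← sum_inner]
  field_simp
  ring

end

theorem stmt_3_general (n N : ℕ) (hn : 0 < n)
    (f : Fin n → EuclideanSpace ℝ (Fin N) → ℝ)
    (μ L : ℝ) (hμ : 0 < μ)
    (hdiff : ∀ i, Differentiable ℝ (f i))
    (hsmooth : ∀ i u w, ‖gradient (f i) u - gradient (f i) w‖ ≤ L * ‖u - w‖)
    (hsc : ∀ i u w, f i w ≥ f i u + ⟪gradient (f i) u, w - u⟫ + μ / 2 * ‖w - u‖ ^ 2)
    (y : Fin n → EuclideanSpace ℝ (Fin N))
    (ybar : EuclideanSpace ℝ (Fin N)) (hybar : ybar = (n : ℝ)⁻¹ • ∑ i, y i)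
    (g : EuclideanSpace ℝ (Fin N)) (hg : g = (n : ℝ)⁻¹ • ∑ i, gradient (f i) (y i))
    (fhat : ℝ)
    (hfhat : fhat = (n : ℝ)⁻¹ * ∑ i, (f i (y i) + ⟪gradient (f i) (y i), ybar - y i⟫)) :
    ∀ ω : EuclideanSpace ℝ (Fin N),
      ((n : ℝ)⁻¹ * ∑ i, f i ω ≥ fhat + ⟪g, ω - ybar⟫ + μ / 2 * ‖ω - ybar‖ ^ 2) ∧
      ((n : ℝ)⁻¹ * ∑ i, f i ω ≤ fhat + ⟪g, ω - ybar⟫ + L * ‖ω - ybar‖ ^ 2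
          + L / n * ∑ i, ‖y i - ybar‖ ^ 2) := by
  intro ω
  have : Nonempty (Fin n) := ⟨⟨0, hn⟩⟩
  have hmodel : ∀ c : ℝ,
      (n : ℝ)⁻¹ * ∑ i, (f i (y i) + ⟪gradient (f i) (y i), ω - y i⟫ + c * ‖ω - y i‖ ^ 2)
        = fhat + ⟪g, ω - ybar⟫ + c * ‖ω - ybar‖ ^ 2 + c / n * ∑ i, ‖y i - ybar‖ ^ 2 := by
    intro c
    subst hfhat hg
    simpa only [Fintype.card_fin] using inv_card_mul_sum_add_inner_add_mul_norm_sq_eq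
      (fun i => f i (y i)) (fun i => gradient (f i) (y i)) y ω c (ybar := ybar)
      (by rwa [Fintype.card_fin])
  constructor
  · calc fhat + ⟪g, ω - ybar⟫ + μ / 2 * ‖ω - ybar‖ ^ 2
        ≤ fhat + ⟪g, ω - ybar⟫ + μ / 2 * ‖ω - ybar‖ ^ 2 + μ / 2 / n * ∑ i, ‖y i - ybar‖ ^ 2 :=
          le_add_of_nonneg_right (by positivity)
      _ = (n : ℝ)⁻¹ * ∑ i, (f i (y i) + ⟪gradient (f i) (y i), ω - y i⟫
            + μ / 2 * ‖ω - y i‖ ^ 2) := (hmodel _).symm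
      _ ≤ (n : ℝ)⁻¹ * ∑ i, f i ω := by gcongr with i; exact hsc i (y i) ω
  · calc (n : ℝ)⁻¹ * ∑ i, f i ω
        ≤ (n : ℝ)⁻¹ * ∑ i, (f i (y i) + ⟪gradient (f i) (y i), ω - y i⟫ + L * ‖ω - y i‖ ^ 2) := by
          gcongr with i
          exact le_add_inner_gradient_add_mul_norm_sq (hdiff i) (hsmooth i) (y i) ω
      _ = _ := hmodel L

/-- inexact gradient inequalities for the average of `n` μ-strongly convex,
L-smooth functions evaluated at possibly different points `y i`. -/
theorem stmt_3 (n N : ℕ) (hn : 0 < n)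
    (f : Fin n → EuclideanSpace ℝ (Fin N) → ℝ)
    (μ L : ℝ) (hμ : 0 < μ) (hμL : μ ≤ L)
    (hdiff : ∀ i, Differentiable ℝ (f i))
    (hsmooth : ∀ i u w, ‖gradient (f i) u - gradient (f i) w‖ ≤ L * ‖u - w‖)
    (hsc : ∀ i u w, f i w ≥ f i u + ⟪gradient (f i) u, w - u⟫ + μ / 2 * ‖w - u‖ ^ 2)
    (y : Fin n → EuclideanSpace ℝ (Fin N))
    (ybar : EuclideanSpace ℝ (Fin N)) (hybar : ybar = (n : ℝ)⁻¹ • ∑ i, y i)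
    (g : EuclideanSpace ℝ (Fin N)) (hg : g = (n : ℝ)⁻¹ • ∑ i, gradient (f i) (y i))
    (fhat : ℝ)
    (hfhat : fhat = (n : ℝ)⁻¹ * ∑ i, (f i (y i) + ⟪gradient (f i) (y i), ybar - y i⟫)) :
    ∀ ω : EuclideanSpace ℝ (Fin N),
      ((n : ℝ)⁻¹ * ∑ i, f i ω ≥ fhat + ⟪g, ω - ybar⟫ + μ / 2 * ‖ω - ybar‖ ^ 2) ∧
      ((n : ℝ)⁻¹ * ∑ i, f i ω ≤ fhat + ⟪g, ω - ybar⟫ + L * ‖ω - ybar‖ ^ 2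
          + L / n * ∑ i, ‖y i - ybar‖ ^ 2) :=
  stmt_3_general n N hn f μ L hμ hdiff hsmooth hsc y ybar hybar g hg fhat hfhat
end

section
/- In the Acc-DNGD-SC setup with 0 < η < 1/μ (so that α = √(μη) ∈ (0,1)), define f̂(t) = (1/n)Σ_i [ f_i(y_i(t)) + ⟨∇f_i(y_i(t)), ȳ(t) − y_i(t)⟩ ], and define functions Φ_t : ℝ^N → ℝ by Φ₀(ω) = f(x̄(0)) + (μ/2)‖ω − v̄(0)‖² and Φ_{t+1}(ω) = (1−α)Φ_t(ω) + α( f̂(t) + ⟨g(t), ω − ȳ(t)⟩ + (μ/2)‖ω − ȳ(t)‖² ). Then: (a) Φ_t(ω) = φ_t* + (μ/2)‖ω − v̄(t)‖² for all ω and t, where φ₀* = f(x̄(0)) and φ_{t+1}* = (1−α)φ_t* + (μ/2)(1−α)α‖v̄(t) − ȳ(t)‖² + α f̂(t) − (η/2)‖g(t)‖² + (1−α)α⟨g(t), v̄(t) − ȳ(t)⟩; and (b) for every ω and t, Φ_t(ω) ≤ f(ω) + (1−α)^t (Φ₀(ω) − f(ω)). -/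
open scoped RealInnerProductSpace

/-- Coercion of a plain vector into Euclidean space (so that ‖·‖ is the 2-norm). -/
def toE {n : ℕ} (v : Fin n → ℝ) : EuclideanSpace ℝ (Fin n) := WithLp.toLp 2 v

/-!
Since `W` is column stochastic, mixing preserves sums: the tracker `s` always averages to `g`,
and averaging the `v`-update gives `v̄(t+1) = (1-α) v̄(t) + α ȳ(t) - (η/α) g(t)`.
(a) `Φ_{t+1}` is a convex combination of two quadratics of curvature `μ`; completing the square
(with `α² = μη`) shows that it is again such a quadratic, centred exactly at `v̄(t+1)`.
(b) Averaging the strong-convexity inequalities of the `f i` at the points `y i` and applying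
Jensen to `‖·‖²` shows that the quadratic added at each step lies below `f`; hence
`Φ_{t+1} - f ≤ (1-α)(Φ_t - f)`.
-/

section Averaging

open Finset

variable {ι E : Type*} [Fintype ι]

theorem sum_sum_smul_of_sum_col_eq_one [AddCommGroup E] [Module ℝ E] {W : Matrix ι ι ℝ}
    (hWcol : ∀ j, ∑ i, W i j = 1) (z : ι → E) :
    ∑ i, ∑ j, W i j • z j = ∑ j, z j := by
  rw [sum_comm]
  exact sum_congr rfl fun j _ => by rw [← sum_smul, hWcol, one_smul]

theorem sum_eq_sum_of_tracking [AddCommGroup E] [Module ℝ E] {W : Matrix ι ι ℝ}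
    (hWcol : ∀ j, ∑ i, W i j = 1) {s G : ℕ → ι → E} (hs0 : ∀ i, s 0 i = G 0 i)
    (hs : ∀ t i, s (t + 1) i = (∑ j, W i j • s t j) + G (t + 1) i - G t i) (t : ℕ) :
    ∑ i, s t i = ∑ i, G t i := by
  induction t with
  | zero => exact sum_congr rfl fun i _ => hs0 i
  | succ t ih =>
    simp only [hs, sum_sub_distrib, sum_add_distrib, sum_sum_smul_of_sum_col_eq_one hWcol, ih]
    abel

variable [NormedAddCommGroup E] [InnerProductSpace ℝ E]

theorem norm_sub_avg_sq_le [Nonempty ι] (ω : E) (y : ι → E) :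
    ‖ω - (Fintype.card ι : ℝ)⁻¹ • ∑ i, y i‖ ^ 2 ≤
      (Fintype.card ι : ℝ)⁻¹ * ∑ i, ‖ω - y i‖ ^ 2 := by
  have hcard : (Fintype.card ι : ℝ) ≠ 0 := Nat.cast_ne_zero.mpr Fintype.card_ne_zero
  have hconv : ConvexOn ℝ Set.univ fun x : E => ‖x‖ ^ 2 :=
    convexOn_univ_norm.pow (fun _ _ => norm_nonneg _) 2
  have havg : ω - (Fintype.card ι : ℝ)⁻¹ • ∑ i, y i =
      ∑ i, (Fintype.card ι : ℝ)⁻¹ • (ω - y i) := by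
    rw [← smul_sum, sum_sub_distrib, sum_const, card_univ, ← Nat.cast_smul_eq_nsmul ℝ,
      smul_sub, smul_smul, inv_mul_cancel₀ hcard, one_smul]
  rw [havg, mul_sum]
  exact hconv.map_sum_le (fun _ _ => by positivity)
    (by simp [card_univ, hcard]) (fun _ _ => Set.mem_univ _)

theorem avg_inner_sub_add_inner_avg_sub (a y : ι → E) (z ω : E) :
    (Fintype.card ι : ℝ)⁻¹ * ∑ i, ⟪a i, z - y i⟫ + ⟪(Fintype.card ι : ℝ)⁻¹ • ∑ i, a i, ω - z⟫ =
      (Fintype.card ι : ℝ)⁻¹ * ∑ i, ⟪a i, ω - y i⟫ := by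
  rw [real_inner_smul_left, sum_inner, ← mul_add, ← sum_add_distrib]
  congr 1
  exact sum_congr rfl fun i _ => by rw [← inner_add_right, sub_add_sub_cancel']

theorem avg_linearization_add_sq_le [Nonempty ι] {f : ι → E → ℝ} {d y : ι → E} {μ : ℝ}
    (hμ : 0 ≤ μ)
    (hsc : ∀ i w, f i w ≥ f i (y i) + ⟪d i, w - y i⟫ + μ / 2 * ‖w - y i‖ ^ 2) (ω : E) :
    (Fintype.card ι : ℝ)⁻¹ * ∑ i, (f i (y i) + ⟪d i, (Fintype.card ι : ℝ)⁻¹ • ∑ j, y j - y i⟫)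
        + ⟪(Fintype.card ι : ℝ)⁻¹ • ∑ i, d i, ω - (Fintype.card ι : ℝ)⁻¹ • ∑ i, y i⟫
        + μ / 2 * ‖ω - (Fintype.card ι : ℝ)⁻¹ • ∑ i, y i‖ ^ 2 ≤
      (Fintype.card ι : ℝ)⁻¹ * ∑ i, f i ω := by
  set c : ℝ := (Fintype.card ι : ℝ)⁻¹
  have hsum : c * ∑ i, (f i (y i) + ⟪d i, ω - y i⟫ + μ / 2 * ‖ω - y i‖ ^ 2) ≤ c * ∑ i, f i ω :=
    mul_le_mul_of_nonneg_left (sum_le_sum fun i _ => hsc i ω) (by positivity)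
  have hjensen := mul_le_mul_of_nonneg_left (norm_sub_avg_sq_le ω y) (by positivity : 0 ≤ μ / 2)
  have hlin := avg_inner_sub_add_inner_avg_sub d y (c • ∑ j, y j) ω
  simp only [sum_add_distrib, mul_add, ← mul_sum] at hsum ⊢
  linarith

end Averaging

section EstimateSequence

variable {E : Type*} [NormedAddCommGroup E] [InnerProductSpace ℝ E]

theorem convex_comb_quadratic_eq {μ α η : ℝ} (hμ : μ ≠ 0) (hαμη : α ^ 2 = μ * η)
    (ω v y g : E) :
    (1 - α) * (μ / 2 * ‖ω - v‖ ^ 2) + α * (⟪g, ω - y⟫ + μ / 2 * ‖ω - y‖ ^ 2) =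
      μ / 2 * (1 - α) * α * ‖v - y‖ ^ 2 - η / 2 * ‖g‖ ^ 2 + (1 - α) * α * ⟪g, v - y⟫
        + μ / 2 * ‖ω - ((1 - α) • v + α • y - (η / α) • g)‖ ^ 2 := by
  obtain rfl : η = α ^ 2 / μ := by field_simp; linear_combination -hαμη
  simp only [← real_inner_self_eq_norm_sq, inner_sub_left, inner_sub_right,
    inner_add_left, inner_add_right, real_inner_smul_left, real_inner_smul_right]
  rw [real_inner_comm v ω, real_inner_comm y ω, real_inner_comm g ω,
    real_inner_comm y v, real_inner_comm g v, real_inner_comm g y]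
  field_simp
  ring

theorem estimate_eq_of_recursion {μ α η : ℝ} (hμ : μ ≠ 0) (hαμη : α ^ 2 = μ * η)
    {Φ : ℕ → E → ℝ} {φs fhat : ℕ → ℝ} {v y g : ℕ → E}
    (hΦ0 : ∀ ω, Φ 0 ω = φs 0 + μ / 2 * ‖ω - v 0‖ ^ 2)
    (hΦ : ∀ t ω, Φ (t + 1) ω =
      (1 - α) * Φ t ω + α * (fhat t + ⟪g t, ω - y t⟫ + μ / 2 * ‖ω - y t‖ ^ 2))
    (hφs : ∀ t, φs (t + 1) =
      (1 - α) * φs t + μ / 2 * (1 - α) * α * ‖v t - y t‖ ^ 2 + α * fhat t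
        - η / 2 * ‖g t‖ ^ 2 + (1 - α) * α * ⟪g t, v t - y t⟫)
    (hv : ∀ t, v (t + 1) = (1 - α) • v t + α • y t - (η / α) • g t) (t : ℕ) (ω : E) :
    Φ t ω = φs t + μ / 2 * ‖ω - v t‖ ^ 2 := by
  induction t generalizing ω with
  | zero => exact hΦ0 ω
  | succ t ih =>
    rw [hΦ, ih, hφs, hv]
    linear_combination convex_comb_quadratic_eq hμ hαμη ω (v t) (y t) (g t)

theorem le_add_one_sub_pow_mul_of_recursion {X : Type*} {α : ℝ} (hα0 : 0 ≤ α) (hα1 : α ≤ 1)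
    {Φ Q : ℕ → X → ℝ} {F : X → ℝ} (hΦ : ∀ t ω, Φ (t + 1) ω = (1 - α) * Φ t ω + α * Q t ω)
    (hQ : ∀ t ω, Q t ω ≤ F ω) (t : ℕ) (ω : X) :
    Φ t ω ≤ F ω + (1 - α) ^ t * (Φ 0 ω - F ω) := by
  induction t with
  | zero => simp
  | succ t ih =>
    have h1α : 0 ≤ 1 - α := sub_nonneg.mpr hα1
    calc Φ (t + 1) ω = (1 - α) * Φ t ω + α * Q t ω := hΦ t ω
      _ ≤ (1 - α) * (F ω + (1 - α) ^ t * (Φ 0 ω - F ω)) + α * F ω := by gcongr; exact hQ t ω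
      _ = F ω + (1 - α) ^ (t + 1) * (Φ 0 ω - F ω) := by ring

end EstimateSequence

theorem sqrt_mul_mem_Ioo_of_lt_inv {μ η : ℝ} (hμ : 0 < μ) (hη0 : 0 < η) (hη1 : η < 1 / μ) :
    Real.sqrt (μ * η) ∈ Set.Ioo 0 1 := by
  have hμη1 : μ * η < 1 := by rwa [lt_div_iff₀ hμ, mul_comm] at hη1
  exact ⟨Real.sqrt_pos.mpr (mul_pos hμ hη0), (Real.sqrt_lt' one_pos).mpr (by simpa using hμη1)⟩

theorem stmt_5_general (n N : ℕ) (hn : 0 < n)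
    (f : Fin n → EuclideanSpace ℝ (Fin N) → ℝ)
    (μ : ℝ) (hμ : 0 < μ)
    (hsc : ∀ i u w, f i w ≥ f i u + ⟪gradient (f i) u, w - u⟫ + μ / 2 * ‖w - u‖ ^ 2)
    -- consensus matrix
    (W : Matrix (Fin n) (Fin n) ℝ)
    (hWcol : ∀ j, ∑ i, W i j = 1)
    -- step size; 0 < η < 1/μ so that α = √(μη) ∈ (0,1)
    (η : ℝ) (hη0 : 0 < η) (hη1 : η < 1 / μ)
    (α : ℝ) (hα : α = Real.sqrt (μ * η))
    -- the algorithm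
    (v y s : ℕ → Fin n → EuclideanSpace ℝ (Fin N))
    (hs0 : ∀ i, s 0 i = gradient (f i) (y 0 i))
    (hvup : ∀ t i, v (t + 1) i =
      (1 - α) • (∑ j, W i j • v t j) + α • (∑ j, W i j • y t j) - (η / α) • s t i)
    (hsup : ∀ t i, s (t + 1) i =
      (∑ j, W i j • s t j) + gradient (f i) (y (t + 1) i) - gradient (f i) (y t i))
    -- averages, average objective, inexact gradient and f̂
    (F : EuclideanSpace ℝ (Fin N) → ℝ) (hF : F = fun w => (n : ℝ)⁻¹ * ∑ i, f i w)
    (xbar vbar ybar g : ℕ → EuclideanSpace ℝ (Fin N))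
    (hvbar : ∀ t, vbar t = (n : ℝ)⁻¹ • ∑ i, v t i)
    (hybar : ∀ t, ybar t = (n : ℝ)⁻¹ • ∑ i, y t i)
    (hg : ∀ t, g t = (n : ℝ)⁻¹ • ∑ i, gradient (f i) (y t i))
    (fhat : ℕ → ℝ)
    (hfhat : ∀ t, fhat t =
      (n : ℝ)⁻¹ * ∑ i, (f i (y t i) + ⟪gradient (f i) (y t i), ybar t - y t i⟫))
    -- the estimate functions Φ_t
    (Φ : ℕ → EuclideanSpace ℝ (Fin N) → ℝ)
    (hΦ0 : ∀ ω, Φ 0 ω = F (xbar 0) + μ / 2 * ‖ω - vbar 0‖ ^ 2)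
    (hΦrec : ∀ t ω, Φ (t + 1) ω =
      (1 - α) * Φ t ω + α * (fhat t + ⟪g t, ω - ybar t⟫ + μ / 2 * ‖ω - ybar t‖ ^ 2))
    -- the sequence φ_t*
    (φs : ℕ → ℝ) (hφs0 : φs 0 = F (xbar 0))
    (hφsrec : ∀ t, φs (t + 1) =
      (1 - α) * φs t + μ / 2 * (1 - α) * α * ‖vbar t - ybar t‖ ^ 2 + α * fhat t
        - η / 2 * ‖g t‖ ^ 2 + (1 - α) * α * ⟪g t, vbar t - ybar t⟫) :
    (∀ t ω, Φ t ω = φs t + μ / 2 * ‖ω - vbar t‖ ^ 2) ∧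
    (∀ t ω, Φ t ω ≤ F ω + (1 - α) ^ t * (Φ 0 ω - F ω)) := by
  have : Nonempty (Fin n) := ⟨⟨0, hn⟩⟩
  obtain ⟨hα0, hα1⟩ : α ∈ Set.Ioo 0 1 := hα ▸ sqrt_mul_mem_Ioo_of_lt_inv hμ hη0 hη1
  have hα2 : α ^ 2 = μ * η := by rw [hα]; exact Real.sq_sqrt (mul_pos hμ hη0).le
  have hsbar (t : ℕ) : (n : ℝ)⁻¹ • ∑ i, s t i = g t := by
    rw [hg, sum_eq_sum_of_tracking (G := fun t i => gradient (f i) (y t i)) hWcol hs0 hsup]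
  have hvbar_succ (t : ℕ) : vbar (t + 1) = (1 - α) • vbar t + α • ybar t - (η / α) • g t := by
    simp only [hvbar, hybar, ← hsbar, hvup, Finset.sum_sub_distrib, Finset.sum_add_distrib,
      ← Finset.smul_sum, sum_sum_smul_of_sum_col_eq_one hWcol, smul_sub, smul_add,
      smul_comm (n : ℝ)⁻¹]
  refine ⟨estimate_eq_of_recursion hμ.ne' hα2 (hφs0 ▸ hΦ0) hΦrec hφsrec hvbar_succ,
    le_add_one_sub_pow_mul_of_recursion hα0.le hα1.le hΦrec fun t ω => ?_⟩
  have h := avg_linearization_add_sq_le hμ.le (fun i => hsc i (y t i)) ω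
  simp only [Fintype.card_fin, ← hybar, ← hg, ← hfhat] at h
  simpa only [hF] using h

/-- properties of the estimate functions Φ_t of Acc-DNGD-SC:
(a) Φ_t(ω) = φ_t* + (μ/2)‖ω − v̄(t)‖² with φ_t* given by the stated recursion, and
(b) Φ_t(ω) ≤ f(ω) + (1−α)^t (Φ₀(ω) − f(ω)). -/
theorem stmt_5 (n N : ℕ) (hn : 0 < n)
    (f : Fin n → EuclideanSpace ℝ (Fin N) → ℝ)
    (μ L : ℝ) (hμ : 0 < μ) (hμL : μ ≤ L)
    (hdiff : ∀ i, Differentiable ℝ (f i))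
    (hsmooth : ∀ i u w, ‖gradient (f i) u - gradient (f i) w‖ ≤ L * ‖u - w‖)
    (hsc : ∀ i u w, f i w ≥ f i u + ⟪gradient (f i) u, w - u⟫ + μ / 2 * ‖w - u‖ ^ 2)
    -- consensus matrix
    (W : Matrix (Fin n) (Fin n) ℝ)
    (hWnonneg : ∀ i j, 0 ≤ W i j)
    (hWrow : ∀ i, ∑ j, W i j = 1)
    (hWcol : ∀ j, ∑ i, W i j = 1)
    (σ : ℝ) (hσ0 : 0 < σ) (hσ1 : σ < 1)
    (havg : ∀ ω : EuclideanSpace ℝ (Fin n),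
      ‖toE (fun i => ∑ j, W i j * ω j) - toE (fun _ => (n : ℝ)⁻¹ * ∑ j, ω j)‖ ≤
        σ * ‖ω - toE (fun _ => (n : ℝ)⁻¹ * ∑ j, ω j)‖)
    -- step size; 0 < η < 1/μ so that α = √(μη) ∈ (0,1)
    (η : ℝ) (hη0 : 0 < η) (hη1 : η < 1 / μ)
    (α : ℝ) (hα : α = Real.sqrt (μ * η))
    -- the algorithm
    (x v y s : ℕ → Fin n → EuclideanSpace ℝ (Fin N))
    (hx0 : ∀ i, x 0 i = y 0 i)
    (hv0 : ∀ i, v 0 i = y 0 i)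
    (hs0 : ∀ i, s 0 i = gradient (f i) (y 0 i))
    (hxup : ∀ t i, x (t + 1) i = (∑ j, W i j • y t j) - η • s t i)
    (hvup : ∀ t i, v (t + 1) i =
      (1 - α) • (∑ j, W i j • v t j) + α • (∑ j, W i j • y t j) - (η / α) • s t i)
    (hyup : ∀ t i, y (t + 1) i = (1 + α)⁻¹ • (x (t + 1) i + α • v (t + 1) i))
    (hsup : ∀ t i, s (t + 1) i =
      (∑ j, W i j • s t j) + gradient (f i) (y (t + 1) i) - gradient (f i) (y t i))
    -- averages, average objective, inexact gradient and f̂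
    (F : EuclideanSpace ℝ (Fin N) → ℝ) (hF : F = fun w => (n : ℝ)⁻¹ * ∑ i, f i w)
    (xbar vbar ybar g : ℕ → EuclideanSpace ℝ (Fin N))
    (hxbar : ∀ t, xbar t = (n : ℝ)⁻¹ • ∑ i, x t i)
    (hvbar : ∀ t, vbar t = (n : ℝ)⁻¹ • ∑ i, v t i)
    (hybar : ∀ t, ybar t = (n : ℝ)⁻¹ • ∑ i, y t i)
    (hg : ∀ t, g t = (n : ℝ)⁻¹ • ∑ i, gradient (f i) (y t i))
    (fhat : ℕ → ℝ)
    (hfhat : ∀ t, fhat t =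
      (n : ℝ)⁻¹ * ∑ i, (f i (y t i) + ⟪gradient (f i) (y t i), ybar t - y t i⟫))
    -- the estimate functions Φ_t
    (Φ : ℕ → EuclideanSpace ℝ (Fin N) → ℝ)
    (hΦ0 : ∀ ω, Φ 0 ω = F (xbar 0) + μ / 2 * ‖ω - vbar 0‖ ^ 2)
    (hΦrec : ∀ t ω, Φ (t + 1) ω =
      (1 - α) * Φ t ω + α * (fhat t + ⟪g t, ω - ybar t⟫ + μ / 2 * ‖ω - ybar t‖ ^ 2))
    -- the sequence φ_t*
    (φs : ℕ → ℝ) (hφs0 : φs 0 = F (xbar 0))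
    (hφsrec : ∀ t, φs (t + 1) =
      (1 - α) * φs t + μ / 2 * (1 - α) * α * ‖vbar t - ybar t‖ ^ 2 + α * fhat t
        - η / 2 * ‖g t‖ ^ 2 + (1 - α) * α * ⟪g t, vbar t - ybar t⟫) :
    (∀ t ω, Φ t ω = φs t + μ / 2 * ‖ω - vbar t‖ ^ 2) ∧
    (∀ t ω, Φ t ω ≤ F ω + (1 - α) ^ t * (Φ 0 ω - F ω)) :=
  stmt_5_general n N hn f μ hμ hsc W hWcol η hη0 hη1 α hα v y s hs0 hvup hsup F hF xbar vbar ybar g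
    hvbar hybar hg fhat hfhat Φ hΦ0 hΦrec φs hφs0 hφsrec
end

section
/- Let σ ∈ (0,1), 0 < μ ≤ L, and 0 < η < min( (1−σ)³/(512L), σ³/(64L) ). Set α = √(μη) and let G(η) be the 3×3 real matrix with rows ( (1−α)σ, ασ, ηL/α ), ( ((1−α)/(1+α))ασ, ((1+α²)/(1+α))σ, 2ηL ), ( ασ, 2, σ+2ηL ). Then the spectral radius ρ(G(η)) satisfies σ + (σηL)^{1/3} < ρ(G(η)) < σ + 4(ηL)^{1/3} < (1+σ)/2. -/
/-!
The characteristic polynomial of `G(η)` is `(λ - c₁)(λ - c₂)(λ - c₃)` perturbed by nonnegative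
terms of size `O(ηL)`, where `0 ≤ cᵢ ≤ σ + 2ηL`. Put `t = (ηL)^{1/3}` and `s = (σηL)^{1/3}`; the
hypothesis on `η` says `4t < σ` and `8t < 1 - σ`, and `α² = μη ≤ t³` gives `α < t / 3`.

Lower bound: at `λ = σ + s` the cubic, multiplied by `1 + α`, equals
`σ((3α - 1)t³ + 2αs²)` minus nonnegative terms, which is negative since `α` is small compared
to `t`. The characteristic polynomial is monic, so it has a real root beyond `σ + s`.

Upper bound: for a complex root `λ` with `r = |λ| - (σ + 2t³) ≥ 0`, every `|λ - cᵢ|` is at least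
`r`, so `r³` is dominated by the perturbation, roughly `6t³ r + 14t³`; this forces `r ≤ 3t`.
-/

/-- Spectral radius of a real 3×3 matrix: the largest modulus of its complex eigenvalues. -/
noncomputable def specRad (M : Matrix (Fin 3) (Fin 3) ℝ) : ℝ :=
  sSup ((fun z => ‖z‖) '' spectrum ℂ (M.map Complex.ofReal))

open Polynomial Set Filter

theorem Polynomial.exists_isRoot_gt_of_eval_neg {p : ℝ[X]} (hp : p.Monic) (hdeg : 0 < p.degree)
    {a : ℝ} (ha : p.eval a < 0) : ∃ r, a < r ∧ p.IsRoot r := by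
  obtain ⟨b, hb_pos, hab⟩ := ((p.tendsto_atTop_of_leadingCoeff_nonneg hdeg
    (by simp [hp.leadingCoeff])).eventually_gt_atTop 0 |>.and (eventually_ge_atTop a)).exists
  obtain ⟨r, hr, hroot⟩ := intermediate_value_Ioo hab p.continuous.continuousOn ⟨ha, hb_pos⟩
  exact ⟨r, hr.1, hroot⟩

theorem Matrix.mem_spectrum_map_ofReal_iff {n : Type*} [Fintype n] [DecidableEq n]
    (M : Matrix n n ℝ) (z : ℂ) :
    z ∈ spectrum ℂ (M.map Complex.ofReal) ↔ aeval z M.charpoly = 0 := by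
  rw [mem_spectrum_iff_isRoot_charpoly, show M.map Complex.ofReal = M.map Complex.ofRealHom from rfl,
    charpoly_map, IsRoot.def, aeval_def, eval₂_eq_eval_map]
  rfl

theorem norm_le_specRad {M : Matrix (Fin 3) (Fin 3) ℝ} {z : ℂ}
    (hz : z ∈ spectrum ℂ (M.map Complex.ofReal)) : ‖z‖ ≤ specRad M :=
  le_csSup ((Matrix.finite_spectrum _).image _).bddAbove ⟨z, hz, rfl⟩

theorem specRad_le {M : Matrix (Fin 3) (Fin 3) ℝ} {c : ℝ}
    (h : ∀ z ∈ spectrum ℂ (M.map Complex.ofReal), ‖z‖ ≤ c) : specRad M ≤ c :=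
  csSup_le ((spectrum.nonempty_of_isAlgClosed_of_finiteDimensional ℂ _).image _)
    (forall_mem_image.2 h)

noncomputable def perturbedCubic (c₁ c₂ c₃ a₁ a₂ a₃ b : ℝ) : ℝ[X] :=
  (X - C c₁) * (X - C c₂) * (X - C c₃) -
    (C a₁ * (X - C c₁) + C a₂ * (X - C c₂) + C a₃ * (X - C c₃) + C b)

section PerturbedCubic

variable {c₁ c₂ c₃ a₁ a₂ a₃ b K : ℝ}

@[simp]
theorem eval_perturbedCubic (w : ℝ) : (perturbedCubic c₁ c₂ c₃ a₁ a₂ a₃ b).eval w =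
    (w - c₁) * (w - c₂) * (w - c₃) - (a₁ * (w - c₁) + a₂ * (w - c₂) + a₃ * (w - c₃) + b) := by
  simp [perturbedCubic]

@[simp]
theorem aeval_perturbedCubic (z : ℂ) : aeval z (perturbedCubic c₁ c₂ c₃ a₁ a₂ a₃ b) =
    (z - c₁) * (z - c₂) * (z - c₃) - (a₁ * (z - c₁) + a₂ * (z - c₂) + a₃ * (z - c₃) + b) := by
  simp [perturbedCubic]

theorem norm_sub_ofReal_mem_Icc {c : ℝ} (hc : c ∈ Icc 0 K) (z : ℂ) :
    ‖z - c‖ ∈ Icc (‖z‖ - K) (‖z‖ + K) := by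
  have hnorm : ‖(c : ℂ)‖ = c := Complex.norm_of_nonneg hc.1
  constructor
  · linarith [norm_sub_norm_le z c, hc.2]
  · linarith [norm_sub_le z c, hc.2]

theorem sub_pow_three_le_of_aeval_perturbedCubic (hc₁ : c₁ ∈ Icc 0 K) (hc₂ : c₂ ∈ Icc 0 K)
    (hc₃ : c₃ ∈ Icc 0 K) (ha₁ : 0 ≤ a₁) (ha₂ : 0 ≤ a₂) (ha₃ : 0 ≤ a₃) {z : ℂ}
    (hz : aeval z (perturbedCubic c₁ c₂ c₃ a₁ a₂ a₃ b) = 0) (hK : K ≤ ‖z‖) :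
    (‖z‖ - K) ^ 3 ≤ (a₁ + a₂ + a₃) * (‖z‖ + K) + |b| := by
  rw [aeval_perturbedCubic, sub_eq_zero] at hz
  obtain ⟨h₁, h₁'⟩ := norm_sub_ofReal_mem_Icc hc₁ z
  obtain ⟨h₂, h₂'⟩ := norm_sub_ofReal_mem_Icc hc₂ z
  obtain ⟨h₃, h₃'⟩ := norm_sub_ofReal_mem_Icc hc₃ z
  have hr : 0 ≤ ‖z‖ - K := sub_nonneg.2 hK
  calc (‖z‖ - K) ^ 3 ≤ ‖z - c₁‖ * ‖z - c₂‖ * ‖z - c₃‖ := by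
        rw [pow_three, ← mul_assoc]; gcongr
    _ = ‖(a₁ : ℂ) * (z - c₁) + a₂ * (z - c₂) + a₃ * (z - c₃) + b‖ := by rw [← hz]; simp
    _ ≤ a₁ * ‖z - c₁‖ + a₂ * ‖z - c₂‖ + a₃ * ‖z - c₃‖ + |b| := by
        refine (norm_add₄_le ..).trans ?_
        simp [abs_of_nonneg ha₁, abs_of_nonneg ha₂, abs_of_nonneg ha₃]
    _ ≤ (a₁ + a₂ + a₃) * (‖z‖ + K) + |b| := by
        nlinarith [mul_le_mul_of_nonneg_left h₁' ha₁, mul_le_mul_of_nonneg_left h₂' ha₂,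
          mul_le_mul_of_nonneg_left h₃' ha₃]

end PerturbedCubic

/-- The matrix `G(η)` of the paper, with `x` standing for `ηL`. -/
noncomputable def gMatrix (σ α x : ℝ) : Matrix (Fin 3) (Fin 3) ℝ :=
  !![(1 - α) * σ, α * σ, x / α;
     (1 - α) / (1 + α) * (α * σ), (1 + α ^ 2) / (1 + α) * σ, 2 * x;
     α * σ, 2, σ + 2 * x]

theorem charpoly_gMatrix {σ α x : ℝ} (hα : α ≠ 0) (hα' : 1 + α ≠ 0) :
    (gMatrix σ α x).charpoly = perturbedCubic ((1 - α) * σ) ((1 + α ^ 2) / (1 + α) * σ)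
      (σ + 2 * x) (4 * x) (σ * x) ((1 - α) / (1 + α) * α ^ 2 * σ ^ 2)
      (2 * x * α ^ 2 * σ ^ 2 + 2 * σ * x * ((1 - α) / (1 + α))) := by
  refine Polynomial.funext fun w => ?_
  rw [Matrix.eval_charpoly, Matrix.det_fin_three, eval_perturbedCubic]
  simp [gMatrix]
  field_simp
  ring

theorem lt_div_three_of_sq_le_pow_three {α t : ℝ} (ht : 0 < t) (ht' : 12 * t < 1)
    (hαt : α ^ 2 ≤ t ^ 3) : α < t / 3 := by
  by_contra! h
  nlinarith [mul_self_le_mul_self (by positivity) h,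
    mul_pos (mul_pos ht ht) (by linarith : (0 : ℝ) < 1 - 12 * t)]

-- The right-hand side is the perturbation bound `A (r + 2K) + |b|` for `G`, with
-- `A ≤ 6t³`, `K ≤ 1 + 2t³` and `|b| ≤ 2t³ + 2t⁶`.
theorem le_three_mul_of_pow_three_le {r t : ℝ} (ht : 0 < t) (ht' : 12 * t < 1)
    (h : r ^ 3 ≤ 6 * t ^ 3 * (r + 2 + 4 * t ^ 3) + 2 * t ^ 3 + 2 * t ^ 6) : r ≤ 3 * t := by
  by_contra! hr
  have hd : 0 < r - 3 * t := by linarith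
  have hsmall : (0 : ℝ) < 1 - 12 * t := by linarith
  nlinarith [pow_pos hd 3, mul_pos (mul_pos hd hd) ht, mul_pos hd (pow_pos ht 2),
    mul_pos (pow_pos ht 3) hsmall, mul_pos (pow_pos ht 4) hsmall, mul_pos (pow_pos ht 5) hsmall,
    mul_pos (mul_pos hd (pow_pos ht 2)) hsmall]

section gMatrix

variable {σ α t : ℝ} (hσ₀ : 0 < σ) (hσ₁ : σ ≤ 1) (hα : 0 < α) (hαt : α ^ 2 ≤ t ^ 3)
  (ht : 0 < t) (ht' : 12 * t < 1)
include hσ₀ hσ₁ hα hαt ht ht'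

theorem eval_charpoly_gMatrix_neg {s : ℝ} (hs : 0 < s) (hs₃ : s ^ 3 = σ * t ^ 3) :
    (gMatrix σ α (t ^ 3)).charpoly.eval (σ + s) < 0 := by
  have hα₃ := lt_div_three_of_sq_le_pow_three ht ht' hαt
  have hα₁ : 0 ≤ 1 - α := by linarith
  have hst : s ≤ t := le_of_pow_le_pow_left₀ three_ne_zero ht.le (by nlinarith)
  have key : (1 + α) * (gMatrix σ α (t ^ 3)).charpoly.eval (σ + s) =
      σ * ((3 * α - 1) * t ^ 3 + 2 * α * s ^ 2) - (2 * t ^ 3 * (1 + α) * s ^ 2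
        + 4 * t ^ 3 * α * σ * s + 4 * t ^ 3 * (1 + α) * (s + α * σ)
        + σ * t ^ 3 * ((1 + α) * s + α * σ * (1 - α)) + 2 * t ^ 3 * (1 + α) * α ^ 2 * σ ^ 2) := by
    rw [charpoly_gMatrix hα.ne' (by linarith), eval_perturbedCubic]
    field_simp
    linear_combination (1 + α) * hs₃
  have hmain : (3 * α - 1) * t ^ 3 + 2 * α * s ^ 2 < 0 := by
    nlinarith [mul_le_mul hst hst hs.le ht.le]
  refine neg_of_mul_neg_right (a := 1 + α) ?_ (by linarith)
  rw [key]
  exact sub_neg.2 ((mul_neg_of_pos_of_neg hσ₀ hmain).trans_le (by positivity))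

theorem add_lt_specRad_gMatrix {s : ℝ} (hs : 0 < s) (hs₃ : s ^ 3 = σ * t ^ 3) :
    σ + s < specRad (gMatrix σ α (t ^ 3)) := by
  obtain ⟨ρ, hρ, hroot⟩ := Polynomial.exists_isRoot_gt_of_eval_neg (Matrix.charpoly_monic _)
    (by rw [Matrix.charpoly_degree_eq_dim]; simp)
    (eval_charpoly_gMatrix_neg hσ₀ hσ₁ hα hαt ht ht' hs hs₃)
  have hρ_mem : (ρ : ℂ) ∈ spectrum ℂ ((gMatrix σ α (t ^ 3)).map Complex.ofReal) := by
    rw [Matrix.mem_spectrum_map_ofReal_iff]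
    have h := aeval_algebraMap_apply_eq_algebraMap_eval (A := ℂ) ρ (gMatrix σ α (t ^ 3)).charpoly
    rwa [hroot.eq_zero, map_zero] at h
  calc σ + s < ρ := hρ
    _ ≤ ‖(ρ : ℂ)‖ := by simpa using le_abs_self ρ
    _ ≤ specRad _ := norm_le_specRad hρ_mem

theorem specRad_gMatrix_le : specRad (gMatrix σ α (t ^ 3)) ≤ σ + 2 * t ^ 3 + 3 * t := by
  refine specRad_le fun z hz ↦ ?_
  have hα₁ : 0 ≤ 1 - α := by linarith [lt_div_three_of_sq_le_pow_three ht ht' hαt]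
  have hk₀ : 0 ≤ (1 - α) / (1 + α) := by positivity
  have hk₁ : (1 - α) / (1 + α) ≤ 1 := (div_le_one (by positivity)).2 (by linarith)
  have hασ : α ^ 2 * σ ^ 2 ≤ t ^ 3 := by nlinarith [pow_le_one₀ hσ₀.le hσ₁ (n := 2)]
  by_cases hK : ‖z‖ < σ + 2 * t ^ 3
  · linarith
  rw [Matrix.mem_spectrum_map_ofReal_iff, charpoly_gMatrix hα.ne' (by linarith)] at hz
  have h := sub_pow_three_le_of_aeval_perturbedCubic (K := σ + 2 * t ^ 3)
    ⟨by positivity, by nlinarith⟩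
    ⟨by positivity, by
      rw [div_mul_eq_mul_div, div_le_iff₀ (by positivity)]; nlinarith [mul_nonneg hσ₀.le hα₁]⟩
    ⟨by positivity, le_rfl⟩ (by positivity) (by positivity) (by positivity) hz (not_lt.1 hK)
  have hA : 4 * t ^ 3 + σ * t ^ 3 + (1 - α) / (1 + α) * α ^ 2 * σ ^ 2 ≤ 6 * t ^ 3 := by
    nlinarith [mul_le_mul hk₁ hασ (by positivity) zero_le_one]
  have hb : |2 * t ^ 3 * α ^ 2 * σ ^ 2 + 2 * σ * t ^ 3 * ((1 - α) / (1 + α))| ≤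
      2 * t ^ 3 + 2 * t ^ 6 := by
    rw [abs_of_nonneg (by positivity)]
    nlinarith [mul_le_mul hσ₁ hk₁ hk₀ zero_le_one, pow_pos ht 3]
  have hr := le_three_mul_of_pow_three_le (r := ‖z‖ - (σ + 2 * t ^ 3)) ht ht' <| by
    nlinarith [mul_le_mul hA
      (by linarith : ‖z‖ + (σ + 2 * t ^ 3) ≤ ‖z‖ - (σ + 2 * t ^ 3) + 2 + 4 * t ^ 3)
      (by positivity) (by positivity)]
  linarith

end gMatrix

theorem stmt_8_general (σ μ L η : ℝ) (hμ : 0 < μ) (hμL : μ ≤ L)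
    (hη0 : 0 < η) (hη : η < min ((1 - σ) ^ 3 / (512 * L)) (σ ^ 3 / (64 * L)))
    (α : ℝ) (hα : α = Real.sqrt (μ * η))
    (G : Matrix (Fin 3) (Fin 3) ℝ)
    (hG : G = !![(1 - α) * σ, α * σ, η * L / α;
                 (1 - α) / (1 + α) * (α * σ), (1 + α ^ 2) / (1 + α) * σ, 2 * η * L;
                 α * σ, 2, σ + 2 * η * L]) :
    σ + (σ * η * L) ^ ((1 : ℝ) / 3) < specRad G ∧
    specRad G < σ + 4 * (η * L) ^ ((1 : ℝ) / 3) ∧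
    σ + 4 * (η * L) ^ ((1 : ℝ) / 3) < (1 + σ) / 2 := by
  have hL : 0 < L := hμ.trans_le hμL
  have hηL : 0 < η * L := mul_pos hη0 hL
  have cube_rpow {y : ℝ} (hy : 0 ≤ y) : (y ^ ((1 : ℝ) / 3)) ^ 3 = y := by
    rw [one_div, ← Nat.cast_ofNat, Real.rpow_inv_natCast_pow hy three_ne_zero]
  set t := (η * L) ^ ((1 : ℝ) / 3)
  have ht : 0 < t := by positivity
  have ht₃ : t ^ 3 = η * L := cube_rpow hηL.le
  obtain ⟨hη₁, hη₂⟩ := lt_min_iff.1 hη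
  rw [lt_div_iff₀ (by positivity)] at hη₁ hη₂
  have h8t : 8 * t < 1 - σ :=
    (Odd.pow_lt_pow (n := 3) (by decide)).1 (by linear_combination 512 * ht₃ + hη₁)
  have h4t : 4 * t < σ :=
    (Odd.pow_lt_pow (n := 3) (by decide)).1 (by linear_combination 64 * ht₃ + hη₂)
  have hσ₀ : 0 < σ := by linarith
  have ht' : 12 * t < 1 := by linarith
  have hα₀ : 0 < α := hα ▸ Real.sqrt_pos.2 (mul_pos hμ hη0)
  have hαt : α ^ 2 ≤ t ^ 3 := by
    rw [hα, Real.sq_sqrt (by positivity), ht₃]; nlinarith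
  rw [show G = gMatrix σ α (t ^ 3) by rw [hG, ht₃, gMatrix, mul_assoc 2 η L]]
  refine ⟨add_lt_specRad_gMatrix hσ₀ (by linarith) hα₀ hαt ht ht' (by positivity)
    (by rw [cube_rpow (by positivity), ht₃, mul_assoc]), ?_, by linarith⟩
  calc specRad _ ≤ σ + 2 * t ^ 3 + 3 * t := specRad_gMatrix_le hσ₀ (by linarith) hα₀ hαt ht ht'
    _ < σ + 4 * t := by nlinarith [mul_pos ht ht]

/-- bounds on the spectral radius of the linear-system matrix G(η) of
Acc-DNGD-SC: σ + (σηL)^{1/3} < ρ(G(η)) < σ + 4(ηL)^{1/3} < (1+σ)/2. -/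
theorem stmt_8 (σ μ L η : ℝ) (hσ0 : 0 < σ) (hσ1 : σ < 1) (hμ : 0 < μ) (hμL : μ ≤ L)
    (hη0 : 0 < η) (hη : η < min ((1 - σ) ^ 3 / (512 * L)) (σ ^ 3 / (64 * L)))
    (α : ℝ) (hα : α = Real.sqrt (μ * η))
    (G : Matrix (Fin 3) (Fin 3) ℝ)
    (hG : G = !![(1 - α) * σ, α * σ, η * L / α;
                 (1 - α) / (1 + α) * (α * σ), (1 + α ^ 2) / (1 + α) * σ, 2 * η * L;
                 α * σ, 2, σ + 2 * η * L]) :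
    σ + (σ * η * L) ^ ((1 : ℝ) / 3) < specRad G ∧
    specRad G < σ + 4 * (η * L) ^ ((1 : ℝ) / 3) ∧
    σ + 4 * (η * L) ^ ((1 : ℝ) / 3) < (1 + σ) / 2 :=
  stmt_8_general σ μ L η hμ hμL hη0 hη α hα G hG
end

section
/- Let f_1,…,f_n : ℝ^N → ℝ each be convex and L-smooth, and let f = (1/n)Σ_{i=1}^n f_i. For any points y_1,…,y_n ∈ ℝ^N, set ȳ = (1/n)Σ_i y_i, g = (1/n)Σ_i ∇f_i(y_i), and f̂ = (1/n)Σ_i [ f_i(y_i) + ⟨∇f_i(y_i), ȳ − y_i⟩ ]. Then for every ω ∈ ℝ^N: (1) f(ω) ≥ f̂ + ⟨g, ω − ȳ⟩, and (2) f(ω) ≤ f̂ + ⟨g, ω − ȳ⟩ + L‖ω − ȳ‖² + (L/n)Σ_{i=1}^n ‖y_i − ȳ‖². -/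
/-!
Each `f i` lies above its tangent plane at `y i` (convexity) and below the tangent paraboloid
`f (y i) + ⟪∇f i (y i), ω - y i⟫ + L/2 ‖ω - y i‖²` (the descent lemma for an `L`-Lipschitz
gradient). Splitting `ω - y i = (ȳ - y i) + (ω - ȳ)` in the linear term, bounding
`‖ω - y i‖² ≤ 2 (‖ω - ȳ‖² + ‖y i - ȳ‖²)` and averaging over `i` gives both inequalities.
-/

open scoped RealInnerProductSpace

section Gradient

variable {E : Type*} [NormedAddCommGroup E] [InnerProductSpace ℝ E] [CompleteSpace E]
  {f : E → ℝ}

theorem hasDerivAt_comp_add_smul_of_differentiableAt {u d : E} {t : ℝ}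
    (hf : DifferentiableAt ℝ f (u + t • d)) :
    HasDerivAt (fun s : ℝ => f (u + s • d)) ⟪gradient f (u + t • d), d⟫ t := by
  have hline : HasDerivAt (fun s : ℝ => u + s • d) d t := by
    simpa using ((hasDerivAt_id t).smul_const d).const_add u
  have := hf.hasGradientAt.hasFDerivAt.comp_hasDerivAt t hline
  rwa [InnerProductSpace.toDual_apply_apply] at this

theorem ConvexOn.add_inner_gradient_le (hconv : ConvexOn ℝ Set.univ f) {u : E}
    (hf : DifferentiableAt ℝ f u) (w : E) :
    f u + ⟪gradient f u, w - u⟫ ≤ f w := by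
  have hline : ConvexOn ℝ Set.univ (fun t : ℝ => f (u + t • (w - u))) := by
    simpa [Function.comp_def, AffineMap.lineMap_apply, add_comm] using
      hconv.comp_affineMap (AffineMap.lineMap u w)
  have hderiv := hasDerivAt_comp_add_smul_of_differentiableAt (u := u) (d := w - u) (t := 0)
    (by simpa using hf)
  have := hline.le_slope_of_hasDerivAt (Set.mem_univ 0) (Set.mem_univ 1) one_pos hderiv
  simp only [zero_smul, add_zero, slope_def_field, one_smul, add_sub_cancel, sub_zero,
    div_one] at this
  linarith

theorem le_add_inner_gradient_add_mul_sq_of_lipschitz (hf : Differentiable ℝ f) {L : ℝ} {u : E}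
    (hlip : ∀ v, ‖gradient f v - gradient f u‖ ≤ L * ‖v - u‖) (w : E) :
    f w ≤ f u + ⟪gradient f u, w - u⟫ + L / 2 * ‖w - u‖ ^ 2 := by
  set φ : ℝ → ℝ := fun t => f (u + t • (w - u)) - t * ⟪gradient f u, w - u⟫
    - L / 2 * t ^ 2 * ‖w - u‖ ^ 2
  have hφ : ∀ t, HasDerivAt φ (⟪gradient f (u + t • (w - u)) - gradient f u, w - u⟫
      - L * t * ‖w - u‖ ^ 2) t := by
    intro t
    have := ((hasDerivAt_comp_add_smul_of_differentiableAt (u := u) (d := w - u) (hf _)).sub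
      ((hasDerivAt_id t).mul_const ⟪gradient f u, w - u⟫)).sub
      (((hasDerivAt_pow 2 t).const_mul (L / 2)).mul_const (‖w - u‖ ^ 2))
    refine this.congr_deriv ?_
    rw [inner_sub_left]; push_cast; ring
  have hanti : AntitoneOn φ (Set.Ici 0) := by
    refine antitoneOn_of_hasDerivWithinAt_nonpos (convex_Ici 0)
      (fun t _ => (hφ t).continuousAt.continuousWithinAt) (fun t _ => (hφ t).hasDerivWithinAt)
      fun t ht => ?_
    rw [interior_Ici, Set.mem_Ioi] at ht
    refine sub_nonpos.2 ?_
    calc ⟪gradient f (u + t • (w - u)) - gradient f u, w - u⟫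
        ≤ ‖gradient f (u + t • (w - u)) - gradient f u‖ * ‖w - u‖ := real_inner_le_norm _ _
      _ ≤ L * ‖t • (w - u)‖ * ‖w - u‖ := by
        gcongr
        simpa using hlip (u + t • (w - u))
      _ = L * t * ‖w - u‖ ^ 2 := by rw [norm_smul, Real.norm_of_nonneg ht.le]; ring
  have := hanti Set.self_mem_Ici (Set.mem_Ici.2 zero_le_one) zero_le_one
  simp only [φ, zero_smul, add_zero, one_smul, add_sub_cancel] at this
  linarith

end Gradient

theorem norm_sub_sq_le_two_mul_add {F : Type*} [SeminormedAddCommGroup F] (a b c : F) :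
    ‖a - b‖ ^ 2 ≤ 2 * (‖a - c‖ ^ 2 + ‖b - c‖ ^ 2) := by
  calc ‖a - b‖ ^ 2 ≤ (‖a - c‖ + ‖b - c‖) ^ 2 := by
        gcongr
        simpa only [norm_sub_rev c b] using norm_sub_le_norm_sub_add_norm_sub a c b
    _ ≤ 2 * (‖a - c‖ ^ 2 + ‖b - c‖ ^ 2) := add_sq_le

theorem stmt_10_general (n N : ℕ) (hn : 0 < n)
    (f : Fin n → EuclideanSpace ℝ (Fin N) → ℝ)
    (L : ℝ) (hL : 0 < L)
    (hdiff : ∀ i, Differentiable ℝ (f i))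
    (hconv : ∀ i, ConvexOn ℝ Set.univ (f i))
    (hsmooth : ∀ i u w, ‖gradient (f i) u - gradient (f i) w‖ ≤ L * ‖u - w‖)
    (y : Fin n → EuclideanSpace ℝ (Fin N))
    (ybar : EuclideanSpace ℝ (Fin N))
    (g : EuclideanSpace ℝ (Fin N)) (hg : g = (n : ℝ)⁻¹ • ∑ i, gradient (f i) (y i))
    (fhat : ℝ)
    (hfhat : fhat = (n : ℝ)⁻¹ * ∑ i, (f i (y i) + ⟪gradient (f i) (y i), ybar - y i⟫)) :
    ∀ ω : EuclideanSpace ℝ (Fin N),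
      ((n : ℝ)⁻¹ * ∑ i, f i ω ≥ fhat + ⟪g, ω - ybar⟫) ∧
      ((n : ℝ)⁻¹ * ∑ i, f i ω ≤ fhat + ⟪g, ω - ybar⟫ + L * ‖ω - ybar‖ ^ 2
          + L / n * ∑ i, ‖y i - ybar‖ ^ 2) := by
  intro ω
  subst hg hfhat
  set G := fun i => gradient (f i) (y i)
  have hrecenter : ∀ i, ⟪G i, ω - y i⟫ = ⟪G i, ybar - y i⟫ + ⟪G i, ω - ybar⟫ := fun i => by
    rw [← inner_add_right, sub_add_sub_cancel']
  have hinner_g : ⟪(n : ℝ)⁻¹ • ∑ i, G i, ω - ybar⟫ = (n : ℝ)⁻¹ * ∑ i, ⟪G i, ω - ybar⟫ := by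
    rw [real_inner_smul_left, sum_inner]
  refine ⟨?_, ?_⟩
  · rw [ge_iff_le, hinner_g, ← mul_add, ← Finset.sum_add_distrib]
    gcongr with i
    linarith [(hconv i).add_inner_gradient_le (hdiff i (y i)) ω, hrecenter i]
  · have hupper : ∀ i, f i ω ≤ f i (y i) + ⟪G i, ybar - y i⟫ + ⟪G i, ω - ybar⟫
        + (L * ‖ω - ybar‖ ^ 2 + L * ‖y i - ybar‖ ^ 2) := fun i => by
      have hdescent := le_add_inner_gradient_add_mul_sq_of_lipschitz (hdiff i)
        (fun v => hsmooth i v (y i)) ω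
      have hsq := mul_le_mul_of_nonneg_left (norm_sub_sq_le_two_mul_add ω (y i) ybar)
        (half_pos hL).le
      linarith [hrecenter i]
    have hn' : (n : ℝ) ≠ 0 := Nat.cast_ne_zero.2 hn.ne'
    calc (n : ℝ)⁻¹ * ∑ i, f i ω
        ≤ (n : ℝ)⁻¹ * ∑ i, (f i (y i) + ⟪G i, ybar - y i⟫ + ⟪G i, ω - ybar⟫
          + (L * ‖ω - ybar‖ ^ 2 + L * ‖y i - ybar‖ ^ 2)) := by gcongr with i; exact hupper i
      _ = _ := by
        simp only [hinner_g, Finset.sum_add_distrib, Finset.sum_const, Finset.card_univ,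
          Fintype.card_fin, nsmul_eq_mul, ← Finset.mul_sum]
        field_simp
        ring

/-- inexact gradient inequalities for the average of `n` convex,
L-smooth functions evaluated at possibly different points `y i`. -/
theorem stmt_10 (n N : ℕ) (hn : 0 < n)
    (f : Fin n → EuclideanSpace ℝ (Fin N) → ℝ)
    (L : ℝ) (hL : 0 < L)
    (hdiff : ∀ i, Differentiable ℝ (f i))
    (hconv : ∀ i, ConvexOn ℝ Set.univ (f i))
    (hsmooth : ∀ i u w, ‖gradient (f i) u - gradient (f i) w‖ ≤ L * ‖u - w‖)
    (y : Fin n → EuclideanSpace ℝ (Fin N))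
    (ybar : EuclideanSpace ℝ (Fin N)) (hybar : ybar = (n : ℝ)⁻¹ • ∑ i, y i)
    (g : EuclideanSpace ℝ (Fin N)) (hg : g = (n : ℝ)⁻¹ • ∑ i, gradient (f i) (y i))
    (fhat : ℝ)
    (hfhat : fhat = (n : ℝ)⁻¹ * ∑ i, (f i (y i) + ⟪gradient (f i) (y i), ybar - y i⟫)) :
    ∀ ω : EuclideanSpace ℝ (Fin N),
      ((n : ℝ)⁻¹ * ∑ i, f i ω ≥ fhat + ⟪g, ω - ybar⟫) ∧
      ((n : ℝ)⁻¹ * ∑ i, f i ω ≤ fhat + ⟪g, ω - ybar⟫ + L * ‖ω - ybar‖ ^ 2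
          + L / n * ∑ i, ‖y i - ybar‖ ^ 2) :=
  stmt_10_general n N hn f L hL hdiff hconv hsmooth y ybar g hg fhat hfhat
end

section
/- Let L > 0, t₀ ≥ 1, β ∈ (0,2), η > 0, and define step sizes η_t = η/(t+t₀)^β for t ∈ ℕ. Assume η₀L < 1/4. Define α₀ = √(η₀L) and, recursively, α_{t+1} as the unique solution in (0,1) of α_{t+1}² = (η_{t+1}/η_t)(1−α_{t+1})α_t², and define λ_t = Π_{k=0}^{t−1}(1−α_k). Then: (i) α_t ≤ 2/(t+1) for all t; (ii) there exists C > 0 such that λ_t ≤ C/t^{2−β} for all t ≥ 1; (iii) for all t, λ_t ≥ D(β,t₀)/(t+t₀)^{2−β}, where D(β,t₀) = 1/( (t₀+3)²·e^{16 + 6/(2−β)} ). -/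
/-!
Since `η_{t+1}/η_t ≤ 1`, the recursion gives `α_{t+1}² ≤ (1 - α_{t+1}) α_t²`, and a quadratic
estimate propagates `α_t ≤ 2/(t+1)`. Unrolling the recursion yields the identity
`α_t² (1 - α₀) = η_t L λ_{t+1}`, so `λ_{t+1}` is comparable to `α_t² (t+t₀)^β`; with the bound on
`α_t` this gives the upper bound on `λ_t`. For the lower bound, the identity gives
`α_k ≤ c (k+t₀)^{-β/2} √λ_{k+1}`, hence `1/√λ_{k+1} ≤ 1/√λ_k + c (k+t₀)^{-β/2}`; summing, and
comparing `∑ (k+t₀)^{-β/2}` with `(t+t₀)^{1-β/2}/(1-β/2)` term by term (Bernoulli's inequality),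
gives `1/√λ_t ≲ (t+t₀)^{1-β/2}`.
-/

open Finset Real

lemma le_two_div_add_one_of_sq_le {x a m : ℝ} (hm : 0 < m) (ha : 0 ≤ a) (ham : a ≤ 2 / m)
    (hx : x ^ 2 ≤ (1 - x) * a ^ 2) : x ≤ 2 / (m + 1) := by
  have ha2 : a ^ 2 * m ^ 2 ≤ 4 := by
    have := pow_le_pow_left₀ ha ham 2
    rw [div_pow, le_div_iff₀ (by positivity)] at this
    linarith
  rw [le_div_iff₀ (by linarith)]
  by_contra! h
  have hx1 : x ≤ 1 := by nlinarith [sq_nonneg a]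
  -- `m²x² + 4x - 4` is increasing for `x > 0` and equals `4/(m+1)²` at `x = 2/(m+1)`
  nlinarith [mul_le_mul_of_nonneg_left ha2 (sub_nonneg.2 hx1), mul_pos hm (sub_pos.2 h)]

lemma le_two_div_of_sq_le_one_sub_mul {α : ℕ → ℝ} (h0 : α 0 ≤ 2) (hnn : ∀ t, 0 ≤ α t)
    (hsq : ∀ t, α (t + 1) ^ 2 ≤ (1 - α (t + 1)) * α t ^ 2) (t : ℕ) :
    α t ≤ 2 / ((t : ℝ) + 1) := by
  induction t with
  | zero => simpa using h0
  | succ t ih =>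
    push_cast
    exact le_two_div_add_one_of_sq_le (by positivity) (hnn t) ih (hsq t)

lemma sq_succ_le_one_sub_mul_sq {ηs α : ℕ → ℝ} (hanti : Antitone ηs) (hpos : ∀ t, 0 < ηs t)
    (hα1 : ∀ t, α (t + 1) ≤ 1)
    (hrec : ∀ t, α (t + 1) ^ 2 = ηs (t + 1) / ηs t * (1 - α (t + 1)) * α t ^ 2) (t : ℕ) :
    α (t + 1) ^ 2 ≤ (1 - α (t + 1)) * α t ^ 2 := by
  rw [hrec, mul_assoc]
  exact mul_le_of_le_one_left (mul_nonneg (sub_nonneg.2 (hα1 t)) (sq_nonneg _))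
    (div_le_one_of_le₀ (hanti t.le_succ) (hpos t).le)

lemma sq_mul_one_sub_eq_mul_prod {L : ℝ} {ηs α : ℕ → ℝ} (hηs : ∀ t, ηs t ≠ 0)
    (h0 : α 0 ^ 2 = ηs 0 * L)
    (hrec : ∀ t, α (t + 1) ^ 2 = ηs (t + 1) / ηs t * (1 - α (t + 1)) * α t ^ 2) (t : ℕ) :
    α t ^ 2 * (1 - α 0) = ηs t * L * ∏ k ∈ range (t + 1), (1 - α k) := by
  induction t with
  | zero => simp [h0]
  | succ t ih =>
    rw [prod_range_succ, hrec, mul_assoc _ (α t ^ 2), ih]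
    field_simp [hηs t]

lemma exists_le_div_rpow_of_mul_le {lam α : ℕ → ℝ} {s β c : ℝ} (hs : 0 ≤ s) (hβ : 0 ≤ β)
    (hc : 0 < c) (hα0 : ∀ t, 0 ≤ α t) (hα : ∀ t, α t ≤ 2 / ((t : ℝ) + 1))
    (h : ∀ t, c * lam (t + 1) ≤ ((t : ℝ) + s) ^ β * α t ^ 2) :
    ∃ C > 0, ∀ t : ℕ, 1 ≤ t → lam t ≤ C / (t : ℝ) ^ (2 - β) := by
  refine ⟨4 * (1 + s) ^ β / c, by positivity, fun t ht => ?_⟩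
  obtain ⟨q, rfl⟩ := Nat.exists_eq_add_of_le' ht
  have hN : (0 : ℝ) < q + 1 := by positivity
  have hshift : ((q : ℝ) + s) ^ β ≤ (1 + s) ^ β * ((q : ℝ) + 1) ^ β := by
    rw [← mul_rpow (by positivity) hN.le]
    gcongr
    nlinarith [q.cast_nonneg (α := ℝ)]
  have hαq : α q ^ 2 ≤ 4 / ((q : ℝ) + 1) ^ 2 := by
    have := pow_le_pow_left₀ (hα0 q) (hα q) 2
    rwa [div_pow, show (2 : ℝ) ^ 2 = 4 by norm_num] at this
  have hpow : ((q : ℝ) + 1) ^ (2 - β) = ((q : ℝ) + 1) ^ 2 / ((q : ℝ) + 1) ^ β := by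
    rw [rpow_sub hN, rpow_two]
  push_cast
  calc lam (q + 1) ≤ ((q : ℝ) + s) ^ β * α q ^ 2 / c := by rw [le_div_iff₀ hc]; linarith [h q]
    _ ≤ (1 + s) ^ β * ((q : ℝ) + 1) ^ β * (4 / ((q : ℝ) + 1) ^ 2) / c := by gcongr
    _ = 4 * (1 + s) ^ β / c / ((q : ℝ) + 1) ^ (2 - β) := by
        rw [hpow]
        field_simp

lemma one_div_sqrt_prod_le_one_add_sum {α c : ℕ → ℝ} (hα0 : ∀ k, 0 ≤ α k) (hα1 : ∀ k, α k < 1)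
    (hc : ∀ k, 0 ≤ c k) (h : ∀ k, α k ^ 2 ≤ c k ^ 2 * ∏ j ∈ range (k + 1), (1 - α j)) (t : ℕ) :
    1 / √(∏ j ∈ range t, (1 - α j)) ≤ 1 + ∑ k ∈ range t, c k := by
  induction t with
  | zero => simp
  | succ k ih =>
    set p := ∏ j ∈ range k, (1 - α j)
    have hp : 0 < p := prod_pos fun j _ => sub_pos.2 (hα1 j)
    have h1α : 0 < 1 - α k := sub_pos.2 (hα1 k)
    have hsp := sqrt_pos.2 hp
    have hfirst : (1 - α k) / √(p * (1 - α k)) ≤ 1 / √p := by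
      have : 1 - α k ≤ √(1 - α k) := (le_sqrt h1α.le h1α.le).2 (by nlinarith [hα0 k])
      rw [sqrt_mul hp.le, div_le_div_iff₀ (by positivity) hsp, one_mul, mul_comm]
      exact mul_le_mul_of_nonneg_left this hsp.le
    have hsecond : α k / √(p * (1 - α k)) ≤ c k := by
      have : α k ≤ √(c k ^ 2 * (p * (1 - α k))) :=
        (le_sqrt (hα0 k) (by positivity)).2 (by simpa [prod_range_succ] using h k)
      rwa [sqrt_mul (sq_nonneg _), sqrt_sq (hc k), ← div_le_iff₀ (by positivity)] at this
    rw [prod_range_succ, sum_range_succ]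
    calc 1 / √(p * (1 - α k)) = (1 - α k) / √(p * (1 - α k)) + α k / √(p * (1 - α k)) := by
          rw [← add_div, sub_add_cancel]
      _ ≤ 1 + (∑ k ∈ range k, c k + c k) := by linarith

lemma one_sub_div_rpow_le_rpow_sub_rpow {x b : ℝ} (hx : 1 ≤ x) (hb0 : 0 ≤ b) (hb1 : b ≤ 1) :
    (1 - b) / x ^ b ≤ x ^ (1 - b) - (x - 1) ^ (1 - b) := by
  have hx0 : 0 < x := by linarith
  -- Bernoulli: `(1 - 1/x)^(1-b) ≤ 1 - (1-b)/x`
  have hbern := rpow_one_add_le_one_add_mul_self (s := -(1 / x))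
    (by rw [neg_le_neg_iff, div_le_one hx0]; exact hx) (sub_nonneg.2 hb1) (by linarith)
  have hsplit : (x - 1) ^ (1 - b) = x ^ (1 - b) * (1 + -(1 / x)) ^ (1 - b) := by
    have : 0 ≤ 1 + -(1 / x) := by rw [← sub_eq_add_neg, sub_nonneg, div_le_one hx0]; exact hx
    rw [← mul_rpow hx0.le this]
    congr 1
    field_simp
    ring
  have hxb : x ^ (1 - b) / x = 1 / x ^ b := by
    rw [← rpow_sub_one hx0.ne', sub_sub_cancel_left, rpow_neg hx0.le, one_div]
  calc (1 - b) / x ^ b = x ^ (1 - b) - x ^ (1 - b) * (1 + (1 - b) * -(1 / x)) := by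
        rw [div_eq_mul_one_div _ (x ^ b), ← hxb]; ring
    _ ≤ x ^ (1 - b) - (x - 1) ^ (1 - b) := by
        rw [hsplit]
        gcongr

lemma sum_one_div_rpow_le {s b : ℝ} (hs : 1 ≤ s) (hb0 : 0 ≤ b) (hb1 : b < 1) (t : ℕ) :
    ∑ k ∈ range t, 1 / ((k : ℝ) + s) ^ b ≤ ((t : ℝ) + s - 1) ^ (1 - b) / (1 - b) := by
  induction t with
  | zero =>
    have : 0 ≤ s - 1 := by linarith
    simp only [sum_range_zero, CharP.cast_eq_zero, zero_add]
    exact div_nonneg (rpow_nonneg this _) (by linarith)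
  | succ t ih =>
    have hterm := one_sub_div_rpow_le_rpow_sub_rpow (x := (t : ℝ) + s)
      (by linarith [t.cast_nonneg (α := ℝ)]) hb0 hb1.le
    rw [sum_range_succ, show ((t + 1 : ℕ) : ℝ) + s - 1 = t + s by push_cast; ring]
    rw [le_div_iff₀ (by linarith)] at ih ⊢
    rw [add_mul, one_div_mul_eq_div]
    linarith

lemma one_div_sq_le_of_one_div_sqrt_le {p y : ℝ} (hp : 0 < p) (hy : 0 < y) (h : 1 / √p ≤ y) :
    1 / y ^ 2 ≤ p := by
  rw [one_div_le (sqrt_pos.2 hp) hy] at h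
  simpa [one_div_pow] using (le_sqrt (by positivity) hp.le).1 h

lemma one_div_mul_rpow_le_prod_one_sub {α : ℕ → ℝ} {s β c : ℝ} (hs : 1 ≤ s) (hβ0 : 0 ≤ β)
    (hβ2 : β < 2) (hc : 0 ≤ c) (hα0 : ∀ k, 0 ≤ α k) (hα1 : ∀ k, α k < 1)
    (h : ∀ k, α k ^ 2 ≤ c ^ 2 / ((k : ℝ) + s) ^ β * ∏ j ∈ range (k + 1), (1 - α j)) (t : ℕ) :
    1 / ((1 + 2 * c / (2 - β)) ^ 2 * ((t : ℝ) + s) ^ (2 - β)) ≤ ∏ j ∈ range t, (1 - α j) := by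
  have hpos : ∀ k : ℕ, 0 < (k : ℝ) + s := fun k => by positivity
  have hsq : ∀ k : ℕ, (c / ((k : ℝ) + s) ^ (β / 2)) ^ 2 = c ^ 2 / ((k : ℝ) + s) ^ β := by
    intro k
    rw [div_pow, ← rpow_mul_natCast (hpos k).le]
    norm_num
  have htel := one_div_sqrt_prod_le_one_add_sum hα0 hα1 (fun k => by positivity)
    (fun k => (hsq k).symm ▸ h k) t
  have hsum := sum_one_div_rpow_le hs (by positivity) (by linarith : β / 2 < 1) t
  set T := (t : ℝ) + s
  have hT1 : 1 ≤ T := by linarith [t.cast_nonneg (α := ℝ)]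
  have hTe1 : 1 ≤ T ^ (1 - β / 2) := one_le_rpow hT1 (by linarith)
  have hTe : (T - 1) ^ (1 - β / 2) ≤ T ^ (1 - β / 2) := by gcongr <;> linarith
  have hbound : 1 / √(∏ j ∈ range t, (1 - α j)) ≤ (1 + 2 * c / (2 - β)) * T ^ (1 - β / 2) :=
    calc 1 / √(∏ j ∈ range t, (1 - α j))
        ≤ 1 + c * ∑ k ∈ range t, 1 / ((k : ℝ) + s) ^ (β / 2) := by
          simpa [mul_sum, div_eq_mul_one_div c] using htel
      _ ≤ 1 + c * ((T - 1) ^ (1 - β / 2) / (1 - β / 2)) := by gcongr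
      _ ≤ 1 * T ^ (1 - β / 2) + 2 * c / (2 - β) * T ^ (1 - β / 2) := by
          have hce : c * ((T - 1) ^ (1 - β / 2) / (1 - β / 2))
              = 2 * c / (2 - β) * (T - 1) ^ (1 - β / 2) := by
            field_simp
          rw [hce, one_mul]
          gcongr
      _ = (1 + 2 * c / (2 - β)) * T ^ (1 - β / 2) := by ring
  have hprod : 0 < ∏ j ∈ range t, (1 - α j) := prod_pos fun j _ => sub_pos.2 (hα1 j)
  have hTsq : (T ^ (1 - β / 2)) ^ 2 = T ^ (2 - β) := by
    rw [← rpow_natCast, ← rpow_mul (by linarith)]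
    norm_num
    ring_nf
  simpa [mul_pow, hTsq] using
    one_div_sq_le_of_one_div_sqrt_le hprod (by positivity) hbound

lemma sq_one_add_two_mul_div_le {u s : ℝ} (hu : 0 ≤ u) (hs : 0 < s) :
    (1 + 2 * u / s) ^ 2 ≤ (u + 3) ^ 2 * exp (16 + 6 / s) := by
  have hlin : 1 + 2 * u / s ≤ (u + 3) * (3 / s + 1) := by
    have : 2 * u / s ≤ (u + 3) * (3 / s) := by
      rw [← mul_div_assoc]
      exact div_le_div_of_nonneg_right (by linarith) hs.le
    linarith
  have hexp : 3 / s + 1 ≤ exp (8 + 3 / s) := by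
    linarith [add_one_le_exp (3 / s), exp_le_exp.2 (by linarith : 3 / s ≤ 8 + 3 / s)]
  calc (1 + 2 * u / s) ^ 2 ≤ ((u + 3) * exp (8 + 3 / s)) ^ 2 := by
        gcongr
        exact hlin.trans (by gcongr)
    _ = (u + 3) ^ 2 * exp (16 + 6 / s) := by
        rw [mul_pow, ← exp_nat_mul]
        ring_nf

/-- asymptotic behavior of α_t and λ_t = Π_{k<t}(1−α_k) for the
Acc-DNGD-NSC vanishing step sizes η_t = η/(t+t₀)^β. -/
theorem stmt_16 (L t₀ β η : ℝ) (hL : 0 < L) (ht₀ : 1 ≤ t₀) (hβ0 : 0 < β) (hβ2 : β < 2)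
    (hη : 0 < η)
    (ηs : ℕ → ℝ) (hηs : ∀ t : ℕ, ηs t = η / ((t : ℝ) + t₀) ^ β)
    (hη0L : ηs 0 * L < 1 / 4)
    (α : ℕ → ℝ) (hα0 : α 0 = Real.sqrt (ηs 0 * L))
    (hαmem : ∀ t : ℕ, α (t + 1) ∈ Set.Ioo (0 : ℝ) 1)
    (hαrec : ∀ t : ℕ, α (t + 1) ^ 2 = ηs (t + 1) / ηs t * (1 - α (t + 1)) * α t ^ 2)
    (lam : ℕ → ℝ) (hlam : ∀ t : ℕ, lam t = ∏ k ∈ Finset.range t, (1 - α k)) :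
    (∀ t : ℕ, α t ≤ 2 / ((t : ℝ) + 1)) ∧
    (∃ C > 0, ∀ t : ℕ, 1 ≤ t → lam t ≤ C / (t : ℝ) ^ (2 - β)) ∧
    (∀ t : ℕ, lam t ≥
      (1 / ((t₀ + 3) ^ 2 * Real.exp (16 + 6 / (2 - β)))) / ((t : ℝ) + t₀) ^ (2 - β)) := by
  have hηs_pos : ∀ t, 0 < ηs t := fun t => by rw [hηs]; positivity
  have hα0_lt : α 0 < 1 / 2 := by rw [hα0, sqrt_lt' (by norm_num)]; linarith
  have hα_nonneg : ∀ t, 0 ≤ α t := by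
    rintro (_ | t)
    · exact hα0 ▸ sqrt_nonneg _
    · exact (hαmem t).1.le
  have hα_lt_one : ∀ t, α t < 1 := by
    rintro (_ | t)
    · linarith
    · exact (hαmem t).2
  have hanti : Antitone ηs := antitone_nat_of_succ_le fun t => by
    rw [hηs, hηs]
    gcongr
    linarith
  have hα_le := le_two_div_of_sq_le_one_sub_mul (by linarith) hα_nonneg
    (sq_succ_le_one_sub_mul_sq hanti hηs_pos (fun t => (hα_lt_one _).le) hαrec)
  have hid : ∀ t : ℕ, ((t : ℝ) + t₀) ^ β * (α t ^ 2 * (1 - α 0)) = η * L * lam (t + 1) := by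
    intro t
    rw [hlam, sq_mul_one_sub_eq_mul_prod (fun t => (hηs_pos t).ne')
      (by rw [hα0, sq_sqrt (mul_pos (hηs_pos 0) hL).le]) hαrec, hηs]
    field_simp
  have hηL : 2 * (η * L) ≤ t₀ ^ 2 := by
    have : t₀ ^ β ≤ t₀ ^ 2 := rpow_two t₀ ▸ rpow_le_rpow_of_exponent_le ht₀ hβ2.le
    rw [hηs, div_mul_eq_mul_div, div_lt_iff₀ (by positivity)] at hη0L
    norm_num at hη0L
    nlinarith
  refine ⟨hα_le, exists_le_div_rpow_of_mul_le (s := t₀) (by linarith) hβ0.le (mul_pos hη hL)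
    hα_nonneg hα_le fun t => (hid t).symm.le.trans ?_, fun t => ?_⟩
  · gcongr
    exact mul_le_of_le_one_right (sq_nonneg _) (by linarith [hα_nonneg 0])
  · rw [ge_iff_le, hlam, div_div]
    refine le_trans ?_ (one_div_mul_rpow_le_prod_one_sub ht₀ hβ0.le hβ2 (by linarith : 0 ≤ t₀)
      hα_nonneg hα_lt_one (fun k => ?_) t)
    · gcongr
      exact sq_one_add_two_mul_div_le (by linarith) (by linarith)
    · have hlam_nonneg : 0 ≤ lam (k + 1) :=
        hlam _ ▸ prod_nonneg fun j _ => sub_nonneg.2 (hα_lt_one j).le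
      have hTβ : 0 < ((k : ℝ) + t₀) ^ β := by positivity
      rw [← hlam, div_mul_eq_mul_div, le_div_iff₀ hTβ]
      nlinarith [hid k, mul_le_mul_of_nonneg_right hηL hlam_nonneg,
        mul_nonneg (mul_nonneg hTβ.le (sq_nonneg (α k))) (sub_nonneg.2 hα0_lt.le)]
end

section
/- Let L > 0 and let (η_t)_{t≥0} and (η_t′)_{t≥0} be two positive step size sequences with η₀L < 1, η₀′L < 1, η₀ ≤ η₀′, and η_{t+1}/η_t ≤ η′_{t+1}/η′_t for all t. Define α₀ = √(η₀L) and α₀′ = √(η₀′L), and recursively let α_{t+1} (resp. α′_{t+1}) be the unique solution in (0,1) of α_{t+1}² = (η_{t+1}/η_t)(1−α_{t+1})α_t² (resp. α′_{t+1}² = (η′_{t+1}/η′_t)(1−α′_{t+1})α′_t²). Then α_t ≤ α′_t for all t ∈ ℕ. -/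
/-- comparison lemma for the α-sequences of Acc-DNGD-NSC generated by two
step size sequences: if η₀ ≤ η₀′ and the step size ratios are dominated, then α_t ≤ α′_t. -/
theorem stmt_17 (L : ℝ) (hL : 0 < L)
    (ηs ηs' : ℕ → ℝ) (hηpos : ∀ t, 0 < ηs t) (hηpos' : ∀ t, 0 < ηs' t)
    (h0L : ηs 0 * L < 1) (h0L' : ηs' 0 * L < 1)
    (h00 : ηs 0 ≤ ηs' 0)
    (hratio : ∀ t : ℕ, ηs (t + 1) / ηs t ≤ ηs' (t + 1) / ηs' t)
    (α α' : ℕ → ℝ)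
    (hα0 : α 0 = Real.sqrt (ηs 0 * L)) (hα0' : α' 0 = Real.sqrt (ηs' 0 * L))
    (hαmem : ∀ t : ℕ, α (t + 1) ∈ Set.Ioo (0 : ℝ) 1)
    (hαmem' : ∀ t : ℕ, α' (t + 1) ∈ Set.Ioo (0 : ℝ) 1)
    (hαrec : ∀ t : ℕ, α (t + 1) ^ 2 = ηs (t + 1) / ηs t * (1 - α (t + 1)) * α t ^ 2)
    (hαrec' : ∀ t : ℕ, α' (t + 1) ^ 2 = ηs' (t + 1) / ηs' t * (1 - α' (t + 1)) * α' t ^ 2) :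
    ∀ t : ℕ, α t ≤ α' t := by
  intro t
  induction t with
  | zero =>
    rw [hα0, hα0']
    exact Real.sqrt_le_sqrt (mul_le_mul_of_nonneg_right h00 hL.le)
  | succ t ih =>
    have hx : 0 ≤ α t := by
      cases t with
      | zero => rw [hα0]; exact Real.sqrt_nonneg _
      | succ s => exact (hαmem s).1.le
    obtain ⟨ha0, ha1⟩ := hαmem t
    obtain ⟨hb0, hb1⟩ := hαmem' t
    have hc : 0 < ηs (t + 1) / ηs t := div_pos (hηpos _) (hηpos _)
    have hsq : α t ^ 2 ≤ α' t ^ 2 := pow_le_pow_left₀ hx ih 2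
    have hmul : ηs (t + 1) / ηs t * α t ^ 2 ≤ ηs' (t + 1) / ηs' t * α' t ^ 2 :=
      mul_le_mul (hratio t) hsq (sq_nonneg _) (le_of_lt (lt_of_lt_of_le hc (hratio t)))
    -- key: a²(1-b) ≤ b²(1-a)
    have key : α (t + 1) ^ 2 * (1 - α' (t + 1)) ≤ α' (t + 1) ^ 2 * (1 - α (t + 1)) := by
      rw [hαrec t, hαrec' t]
      have h1 : 0 ≤ 1 - α (t + 1) := by linarith
      have h2 : 0 ≤ 1 - α' (t + 1) := by linarith
      calc ηs (t + 1) / ηs t * (1 - α (t + 1)) * α t ^ 2 * (1 - α' (t + 1))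
          = (ηs (t + 1) / ηs t * α t ^ 2) * ((1 - α (t + 1)) * (1 - α' (t + 1))) := by ring
        _ ≤ (ηs' (t + 1) / ηs' t * α' t ^ 2) * ((1 - α (t + 1)) * (1 - α' (t + 1))) :=
            mul_le_mul_of_nonneg_right hmul (mul_nonneg h1 h2)
        _ = ηs' (t + 1) / ηs' t * (1 - α' (t + 1)) * α' t ^ 2 * (1 - α (t + 1)) := by ring
    by_contra h
    push_neg at h
    nlinarith [mul_pos (sub_pos.2 h) (mul_pos hb0 ha0)]
end
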